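/- Let U, V ⊆ ℝ² be transverse sets and let S₁,…,Sₙ : ℤ²×ℤ² → M_m(ℂ) be Hermitian PSR kernels. Suppose there exist p, q ∈ {1,…,n} such that: for every N > 0 there is C_N > 0 with |S_p(x,y)| ≤ C_N e^{−N d_l(x,∂U) − N d_l(y,∂U)} and |S_q(x,y)| ≤ C_N e^{−N d_l(x,∂V) − N d_l(y,∂V)} for all x,y ∈ ℤ². Then the iterated kernel product S₁·…·Sₙ is given by absolutely convergent sums and Σ_{x,y∈ℤ²} |(S₁·…·Sₙ)(x,y)| < ∞ (so the product is the kernel of a trace-class operator). -/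

import Mathlib

/-!
Say that a kernel `K` has weighted decay for `w` if `‖K x y‖ = O(⟨x - y⟩ ^ (-N) * w x ^ (-N))`
for every `N`, where `⟨x - y⟩ = 1 + d₁(x, y)`. PSR kernels have weighted decay for `1`, and the
geometric mean of the PSR bound and the exponential bound gives `S_p` weighted decay for
`1 + d₁(·, ∂U)` and `S_q` for `1 + d₁(·, ∂V)`. These weights are moderate,
`w x ≤ ⟨x - z⟩ * w z`, so the product of a kernel with weighted decay for `w` and one with
weighted decay for `v` has weighted decay for `w * v`, the sums defining it converging
absolutely. Hence the whole product has weighted decay for both weights, so for their product,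
which dominates `Ψ_{U,V}` and thus, by transversality, `⟨x⟩ ^ c`. A kernel that is
`O(⟨x - y⟩ ^ (-N) * ⟨x⟩ ^ (-N))` for some `N > 2` is absolutely summable over `ℤ² × ℤ²`.
-/

noncomputable section

/-- The lattice ℤ². -/
abbrev Z2 := ℤ × ℤ
/-- The plane ℝ². -/
abbrev R2 := ℝ × ℝ

/-- The ℓ¹ distance on the plane. -/
def d1 (x y : R2) : ℝ := |x.1 - y.1| + |x.2 - y.2|

/-- The ℓ¹ distance from a point to a set. -/
def d1S (x : R2) (S : Set R2) : ℝ := sInf (d1 x '' S)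

/-- The logarithmic distance on the plane: d_l(x,y) = ln(1 + d₁(x,y)). -/
def dl (x y : R2) : ℝ := Real.log (1 + d1 x y)

/-- The logarithmic distance from a point to a set. -/
def dlS (x : R2) (S : Set R2) : ℝ := Real.log (1 + d1S x S)

/-- The Euclidean norm on the plane. -/
def eunorm (x : R2) : ℝ := Real.sqrt (x.1 ^ 2 + x.2 ^ 2)

/-- The Euclidean distance on the plane. -/
def eudist (x y : R2) : ℝ := eunorm (x - y)

/-- The embedding of ℤ² into ℝ². -/
def emb (x : Z2) : R2 := ((x.1 : ℝ), (x.2 : ℝ))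

/-- Ψ_{U,V}(x) = 1 + d₁(x,∂U) + d₁(x,∂V). -/
def Psi (U V : Set R2) (x : R2) : ℝ := 1 + d1S x (frontier U) + d1S x (frontier V)

/-- U and V are transverse: for some c ∈ (0,1), Ψ_{U,V}(x) ≥ |x|ᶜ whenever |x| ≥ 1/c. -/
def Transverse (U V : Set R2) : Prop :=
  ∃ c : ℝ, 0 < c ∧ c < 1 ∧ ∀ x : R2, 1 / c ≤ eunorm x → eunorm x ^ c ≤ Psi U V x

/-- The operator norm of an m×m complex matrix. -/
def matNorm {m : ℕ} (M : Matrix (Fin m) (Fin m) ℂ) : ℝ :=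
  ‖Matrix.toEuclideanCLM (𝕜 := ℂ) M‖

/-- The real-valued indicator function of a subset of the plane. -/
def indR (W : Set R2) (z : R2) : ℝ := Set.indicator W (fun _ => (1:ℝ)) z

/-- Product of two kernels: (A·B)(x,y) = Σ_z A(x,z)B(z,y). -/
def kprod {m : ℕ} (A B : Z2 → Z2 → Matrix (Fin m) (Fin m) ℂ) :
    Z2 → Z2 → Matrix (Fin m) (Fin m) ℂ :=
  fun x y => ∑' z : Z2, A x z * B z y

/-- Left-associated iterated kernel products: PP S k = ((S 0 · S 1) · ⋯) · S k. -/
def PP {m : ℕ} (S : ℕ → Z2 → Z2 → Matrix (Fin m) (Fin m) ℂ) :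
    ℕ → Z2 → Z2 → Matrix (Fin m) (Fin m) ℂ
  | 0 => S 0
  | k + 1 => kprod (PP S k) (S (k + 1))

/-- A kernel is PSR: polynomially short range. -/
def IsPSRker {m : ℕ} (S : Z2 → Z2 → Matrix (Fin m) (Fin m) ℂ) : Prop :=
  ∀ N : ℝ, 0 < N → ∃ C : ℝ, 0 < C ∧ ∀ x y : Z2,
    matNorm (S x y) ≤ C * (1 + d1 (emb x) (emb y)) ^ (-N)

open Real
-- Makes `‖M‖` the operator norm of a matrix, so that `matNorm M = ‖M‖` holds definitionally.
open scoped Matrix.Norms.L2Operator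

lemma d1_nonneg (x y : R2) : 0 ≤ d1 x y := by
  unfold d1; positivity

lemma d1_triangle (x y z : R2) : d1 x z ≤ d1 x y + d1 y z := by
  unfold d1; linarith [abs_sub_le x.1 y.1 z.1, abs_sub_le x.2 y.2 z.2]

lemma d1S_nonneg (x : R2) (A : Set R2) : 0 ≤ d1S x A :=
  Real.sInf_nonneg (by rintro _ ⟨a, -, rfl⟩; exact d1_nonneg x a)

lemma d1S_le_d1_add_d1S (x y : R2) (A : Set R2) : d1S x A ≤ d1 x y + d1S y A := by
  rcases A.eq_empty_or_nonempty with rfl | hA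
  · simp [d1S, d1_nonneg]
  · rw [← sub_le_iff_le_add']
    refine le_csInf (hA.image _) ?_
    rintro _ ⟨a, ha, rfl⟩
    have : d1S x A ≤ d1 x a :=
      csInf_le ⟨0, by rintro _ ⟨b, -, rfl⟩; exact d1_nonneg x b⟩ ⟨a, ha, rfl⟩
    linarith [d1_triangle x y a]

/-- `⟨x - y⟩ = exp (d_l(x, y))` for lattice points. -/
def bracket (x y : Z2) : ℝ := 1 + d1 (emb x) (emb y)

lemma one_le_bracket (x y : Z2) : 1 ≤ bracket x y :=
  le_add_of_nonneg_right (d1_nonneg _ _)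

lemma bracket_pos (x y : Z2) : 0 < bracket x y :=
  one_pos.trans_le (one_le_bracket x y)

lemma bracket_le_mul (x y z : Z2) : bracket x y ≤ bracket x z * bracket z y := by
  unfold bracket
  nlinarith [d1_triangle (emb x) (emb z) (emb y), d1_nonneg (emb x) (emb z),
    d1_nonneg (emb z) (emb y)]

lemma bracket_zero (z : Z2) : bracket z 0 = 1 + (|(z.1 : ℝ)| + |(z.2 : ℝ)|) := by
  simp [bracket, d1, emb]

lemma bracket_eq_bracket_sub_zero (x y : Z2) : bracket x y = bracket (y - x) 0 := by
  rw [bracket_zero]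
  simp only [bracket, d1, emb, Prod.fst_sub, Prod.snd_sub, Int.cast_sub]
  rw [abs_sub_comm (x.1 : ℝ), abs_sub_comm (x.2 : ℝ)]

lemma summable_one_add_abs_int_rpow_neg {s : ℝ} (hs : 1 < s) :
    Summable fun k : ℤ => (1 + |(k : ℝ)|) ^ (-s) := by
  have hnat : Summable fun n : ℕ => (1 + (n : ℝ)) ^ (-s) := by
    refine ((Real.summable_nat_rpow.2 (neg_lt_neg hs)).comp_injective
      (add_left_injective 1)).congr fun n => ?_
    simp [add_comm]
  exact .of_nat_of_neg (by simpa using hnat) (by simpa using hnat)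

lemma summable_bracket_zero_rpow_neg {s : ℝ} (hs : 2 < s) :
    Summable fun z : Z2 => bracket z 0 ^ (-s) := by
  have h1 := summable_one_add_abs_int_rpow_neg (s := s / 2) (by linarith)
  refine (h1.mul_of_nonneg h1 (fun _ => by positivity) (fun _ => by positivity)).of_nonneg_of_le
    (fun z => (rpow_pos_of_pos (bracket_pos z 0) _).le) fun z => ?_
  rw [bracket_zero]
  set a := |(z.1 : ℝ)|
  set b := |(z.2 : ℝ)|
  have ha : 0 ≤ a := abs_nonneg _
  have hb : 0 ≤ b := abs_nonneg _
  calc (1 + (a + b)) ^ (-s) = ((1 + (a + b)) ^ (2 : ℕ)) ^ (-(s / 2)) := by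
        rw [← rpow_natCast, ← rpow_mul (by positivity)]
        ring_nf
    _ ≤ ((1 + a) * (1 + b)) ^ (-(s / 2)) :=
        rpow_le_rpow_of_nonpos (by positivity) (by nlinarith) (by linarith)
    _ = (1 + a) ^ (-(s / 2)) * (1 + b) ^ (-(s / 2)) := mul_rpow (by positivity) (by positivity)

lemma summable_bracket_rpow_neg {s : ℝ} (hs : 2 < s) (x : Z2) :
    Summable fun y : Z2 => bracket x y ^ (-s) := by
  simp_rw [bracket_eq_bracket_sub_zero x]
  exact (Equiv.subRight x).summable_iff.2 (summable_bracket_zero_rpow_neg hs)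

lemma tsum_bracket_rpow_neg (x : Z2) (s : ℝ) :
    ∑' y : Z2, bracket x y ^ (-s) = ∑' z : Z2, bracket z 0 ^ (-s) := by
  simp_rw [bracket_eq_bracket_sub_zero x]
  exact (Equiv.subRight x).tsum_eq fun z => bracket z 0 ^ (-s)

section RapidDecay

variable {ι R : Type*} [SeminormedAddCommGroup R] {K : ι → ι → R} {ρ σ : ι → ι → ℝ}

def RapidDecay (K : ι → ι → R) (ρ : ι → ι → ℝ) : Prop :=
  ∀ N : ℝ, 0 < N → ∃ C : ℝ, 0 < C ∧ ∀ x y, ‖K x y‖ ≤ C * ρ x y ^ (-N)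

/-- Two rapid-decay bounds combine by taking their geometric mean. -/
lemma RapidDecay.mul (hρ : RapidDecay K ρ) (hσ : RapidDecay K σ) (hρ₀ : ∀ x y, 0 ≤ ρ x y)
    (hσ₀ : ∀ x y, 0 ≤ σ x y) : RapidDecay K fun x y => ρ x y * σ x y := by
  intro N hN
  obtain ⟨C₁, hC₁, h₁⟩ := hρ (2 * N) (by linarith)
  obtain ⟨C₂, hC₂, h₂⟩ := hσ (2 * N) (by linarith)
  refine ⟨√(C₁ * C₂), by positivity, fun x y => ?_⟩
  have hsq : ∀ {t : ℝ}, 0 ≤ t → t ^ (-(2 * N)) = (t ^ (-N)) ^ 2 := fun ht => by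
    rw [← rpow_natCast, ← rpow_mul ht]; ring_nf
  have ha := rpow_nonneg (hρ₀ x y) (-N)
  have hb := rpow_nonneg (hσ₀ x y) (-N)
  rw [mul_rpow (hρ₀ x y) (hσ₀ x y),
    ← pow_le_pow_iff_left₀ (norm_nonneg _) (by positivity) two_ne_zero, mul_pow,
    Real.sq_sqrt (by positivity), mul_pow, sq]
  calc ‖K x y‖ * ‖K x y‖ ≤ (C₁ * ρ x y ^ (-(2 * N))) * (C₂ * σ x y ^ (-(2 * N))) :=
        mul_le_mul (h₁ x y) (h₂ x y) (norm_nonneg _)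
          (mul_nonneg hC₁.le (rpow_nonneg (hρ₀ x y) _))
    _ = C₁ * C₂ * ((ρ x y ^ (-N)) ^ 2 * (σ x y ^ (-N)) ^ 2) := by
        rw [hsq (hρ₀ x y), hsq (hσ₀ x y)]; ring

lemma RapidDecay.of_rpow_le (hρ : RapidDecay K ρ) {c D : ℝ} (hc : 0 < c) (hD : 0 < D)
    (hσ₀ : ∀ x y, 0 < σ x y) (h : ∀ x y, σ x y ^ c ≤ D * ρ x y) : RapidDecay K σ := by
  intro N hN
  obtain ⟨C, hC, hK⟩ := hρ (N / c) (by positivity)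
  refine ⟨C * D ^ (N / c), by positivity, fun x y => ?_⟩
  have hσc : 0 < σ x y ^ c * D⁻¹ := by have := hσ₀ x y; positivity
  have hle : σ x y ^ c * D⁻¹ ≤ ρ x y := by
    rw [← div_eq_mul_inv, div_le_iff₀ hD, mul_comm]; exact h x y
  calc ‖K x y‖ ≤ C * ρ x y ^ (-(N / c)) := hK x y
    _ ≤ C * (σ x y ^ c * D⁻¹) ^ (-(N / c)) :=
        mul_le_mul_of_nonneg_left
          (rpow_le_rpow_of_nonpos hσc hle (neg_nonpos.2 (by positivity))) hC.le
    _ = C * D ^ (N / c) * σ x y ^ (-N) := by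
        rw [mul_rpow (by have := hσ₀ x y; positivity) (by positivity), ← rpow_mul (hσ₀ x y).le,
          inv_rpow hD.le, rpow_neg hD.le, inv_inv]
        field_simp

end RapidDecay

def WeightedDecay {R : Type*} [SeminormedAddCommGroup R] (K : Z2 → Z2 → R) (w : Z2 → ℝ) : Prop :=
  RapidDecay K fun x y => bracket x y * w x

lemma weightedDecay_one_iff_rapidDecay {R : Type*} [SeminormedAddCommGroup R]
    {K : Z2 → Z2 → R} : WeightedDecay K 1 ↔ RapidDecay K bracket := by
  simp only [WeightedDecay, Pi.one_apply, mul_one]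

lemma one_le_bracket_mul_one (x z : Z2) : (1 : Z2 → ℝ) x ≤ bracket x z * (1 : Z2 → ℝ) z := by
  simpa using one_le_bracket x z

lemma rpow_neg_mul_rpow_neg_le {t s u w a b N : ℝ} (hN : 0 ≤ N) (ht : 0 < t) (hs : 0 < s)
    (hu : 0 < u) (hw : 1 ≤ w) (ha : 0 < a) (hb : 0 < b) (hut : u ≤ t * s) (hab : a ≤ t * b) :
    (t * w) ^ (-(2 * N + 3)) * (s * b) ^ (-N) ≤ (u * (w * a)) ^ (-N) * t ^ (-3 : ℝ) := by
  have hw₀ : 0 < w := one_pos.trans_le hw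
  simp only [rpow_def_of_pos (mul_pos ht hw₀), rpow_def_of_pos (mul_pos hs hb),
    rpow_def_of_pos (mul_pos hu (mul_pos hw₀ ha)), rpow_def_of_pos ht, ← exp_add, exp_le_exp,
    log_mul ht.ne' hw₀.ne', log_mul hs.ne' hb.ne', log_mul hu.ne' (mul_pos hw₀ ha).ne',
    log_mul hw₀.ne' ha.ne']
  have hlu : log u ≤ log t + log s := by rw [← log_mul ht.ne' hs.ne']; exact log_le_log hu hut
  have hla : log a ≤ log t + log b := by rw [← log_mul ht.ne' hb.ne']; exact log_le_log ha hab
  have hlw : 0 ≤ log w := log_nonneg hw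
  nlinarith [mul_le_mul_of_nonneg_left hlu hN, mul_le_mul_of_nonneg_left hla hN]

section KernelProduct

variable {R : Type*} [NormedRing R] {A B : Z2 → Z2 → R} {w v : Z2 → ℝ}

/-- The weight `v` of the right factor is moved from the summation variable `z` to `x` at the
cost of a factor `⟨x − z⟩`, which the surplus decay of the left factor absorbs. -/
lemma WeightedDecay.norm_mul_le (hA : WeightedDecay A w) (hB : WeightedDecay B v)
    (hw : ∀ x, 1 ≤ w x) (hv₀ : ∀ x, 0 < v x) (hv : ∀ x z, v x ≤ bracket x z * v z)
    {N : ℝ} (hN : 0 < N) :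
    ∃ C : ℝ, 0 < C ∧ ∀ x y z, ‖A x z * B z y‖ ≤
      C * (bracket x y * (w x * v x)) ^ (-N) * bracket x z ^ (-3 : ℝ) := by
  obtain ⟨C₁, hC₁, hA⟩ := hA (2 * N + 3) (by linarith)
  obtain ⟨C₂, hC₂, hB⟩ := hB N hN
  refine ⟨C₁ * C₂, mul_pos hC₁ hC₂, fun x y z => ?_⟩
  calc ‖A x z * B z y‖ ≤ ‖A x z‖ * ‖B z y‖ := _root_.norm_mul_le _ _
    _ ≤ (C₁ * (bracket x z * w x) ^ (-(2 * N + 3))) * (C₂ * (bracket z y * v z) ^ (-N)) :=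
        mul_le_mul (hA x z) (hB z y) (norm_nonneg _)
          (mul_nonneg hC₁.le
            (rpow_nonneg (mul_pos (bracket_pos x z) (one_pos.trans_le (hw x))).le _))
    _ = C₁ * C₂ * ((bracket x z * w x) ^ (-(2 * N + 3)) * (bracket z y * v z) ^ (-N)) := by ring
    _ ≤ C₁ * C₂ * ((bracket x y * (w x * v x)) ^ (-N) * bracket x z ^ (-3 : ℝ)) :=
        mul_le_mul_of_nonneg_left (rpow_neg_mul_rpow_neg_le hN.le (bracket_pos x z)
          (bracket_pos z y) (bracket_pos x y) (hw x) (hv₀ x) (hv₀ z) (bracket_le_mul x y z)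
          (hv x z)) (by positivity)
    _ = _ := by ring

lemma WeightedDecay.summable_norm_mul (hA : WeightedDecay A w) (hB : WeightedDecay B v)
    (hw : ∀ x, 1 ≤ w x) (hv₀ : ∀ x, 0 < v x) (hv : ∀ x z, v x ≤ bracket x z * v z) (x y : Z2) :
    Summable fun z => ‖A x z * B z y‖ := by
  obtain ⟨C, -, hC⟩ := hA.norm_mul_le hB hw hv₀ hv one_pos
  exact ((summable_bracket_rpow_neg (by norm_num) x).mul_left _).of_nonneg_of_le
    (fun _ => norm_nonneg _) (hC x y)

lemma WeightedDecay.tsum_mul (hA : WeightedDecay A w) (hB : WeightedDecay B v)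
    (hw : ∀ x, 1 ≤ w x) (hv₀ : ∀ x, 0 < v x) (hv : ∀ x z, v x ≤ bracket x z * v z) :
    WeightedDecay (fun x y => ∑' z, A x z * B z y) (w * v) := by
  intro N hN
  obtain ⟨C, hC, hAB⟩ := hA.norm_mul_le hB hw hv₀ hv hN
  set T := ∑' z : Z2, bracket z 0 ^ (-3 : ℝ)
  have hT : 0 < T := (summable_bracket_zero_rpow_neg (by norm_num)).tsum_pos
    (fun z => (rpow_pos_of_pos (bracket_pos z 0) _).le) 0 (rpow_pos_of_pos (bracket_pos 0 0) _)
  refine ⟨C * T, mul_pos hC hT, fun x y => ?_⟩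
  calc ‖∑' z, A x z * B z y‖ ≤ ∑' z, ‖A x z * B z y‖ :=
        norm_tsum_le_tsum_norm (hA.summable_norm_mul hB hw hv₀ hv x y)
    _ ≤ ∑' z, C * (bracket x y * (w x * v x)) ^ (-N) * bracket x z ^ (-3 : ℝ) :=
        (hA.summable_norm_mul hB hw hv₀ hv x y).tsum_le_tsum (hAB x y)
          ((summable_bracket_rpow_neg (by norm_num) x).mul_left _)
    _ = C * T * (bracket x y * (w * v) x) ^ (-N) := by
        rw [tsum_mul_left, tsum_bracket_rpow_neg, Pi.mul_apply]; ring

end KernelProduct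

/-- `exp (d_l(x, A))`. -/
def distWeight (A : Set R2) (x : Z2) : ℝ := 1 + d1S (emb x) A

lemma one_le_distWeight (A : Set R2) (x : Z2) : 1 ≤ distWeight A x :=
  le_add_of_nonneg_right (d1S_nonneg _ _)

lemma distWeight_le_bracket_mul (A : Set R2) (x z : Z2) :
    distWeight A x ≤ bracket x z * distWeight A z := by
  unfold distWeight bracket
  nlinarith [d1S_le_d1_add_d1S (emb x) (emb z) A, d1_nonneg (emb x) (emb z),
    d1S_nonneg (emb z) A]

section MatrixKernel

variable {m : ℕ}

lemma rapidDecay_distWeight_of_exp_bound {K : Z2 → Z2 → Matrix (Fin m) (Fin m) ℂ} {A : Set R2}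
    (h : ∀ N : ℝ, 0 < N → ∃ C : ℝ, 0 < C ∧ ∀ x y : Z2,
      matNorm (K x y) ≤ C * exp (-N * dlS (emb x) A - N * dlS (emb y) A)) :
    RapidDecay K fun x _ => distWeight A x := by
  intro N hN
  obtain ⟨C, hC, hK⟩ := h N hN
  refine ⟨C, hC, fun x y => (hK x y).trans (mul_le_mul_of_nonneg_left ?_ hC.le)⟩
  have hy : 0 ≤ dlS (emb y) A := log_nonneg (le_add_of_nonneg_right (d1S_nonneg _ _))
  rw [rpow_def_of_pos (one_pos.trans_le (one_le_distWeight A x)), exp_le_exp]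
  unfold dlS distWeight at *
  nlinarith

lemma IsPSRker.weightedDecay_distWeight {K : Z2 → Z2 → Matrix (Fin m) (Fin m) ℂ} {A : Set R2}
    (hK : IsPSRker K)
    (h : ∀ N : ℝ, 0 < N → ∃ C : ℝ, 0 < C ∧ ∀ x y : Z2,
      matNorm (K x y) ≤ C * exp (-N * dlS (emb x) A - N * dlS (emb y) A)) :
    WeightedDecay K (distWeight A) :=
  RapidDecay.mul hK (rapidDecay_distWeight_of_exp_bound h) (fun x y => (bracket_pos x y).le)
    (fun x _ => (one_pos.trans_le (one_le_distWeight A x)).le)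

variable {S : ℕ → Z2 → Z2 → Matrix (Fin m) (Fin m) ℂ} {n : ℕ}

lemma weightedDecay_PP_one (hS : ∀ j < n, WeightedDecay (S j) 1) :
    ∀ k < n, WeightedDecay (PP S k) 1
  | 0, h => hS 0 h
  | k + 1, h => by
    have := (weightedDecay_PP_one hS k (by omega)).tsum_mul (hS (k + 1) h) (fun _ => le_rfl)
      (fun _ => one_pos) one_le_bracket_mul_one
    rwa [mul_one] at this

lemma weightedDecay_PP {j₀ : ℕ} {w : Z2 → ℝ} (hS : ∀ j < n, WeightedDecay (S j) 1)
    (hw : ∀ x, 1 ≤ w x) (hw' : ∀ x z, w x ≤ bracket x z * w z) (hj₀ : WeightedDecay (S j₀) w) :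
    ∀ k, j₀ ≤ k → k < n → WeightedDecay (PP S k) w
  | 0, hk, _ => by rwa [Nat.le_zero.1 hk] at hj₀
  | k + 1, hk, hkn => by
    rcases Nat.lt_or_eq_of_le hk with hlt | rfl
    · have := (weightedDecay_PP hS hw hw' hj₀ k (by omega) (by omega)).tsum_mul (hS (k + 1) hkn)
        hw (fun _ => one_pos) one_le_bracket_mul_one
      rwa [mul_one] at this
    · have := (weightedDecay_PP_one hS k (by omega)).tsum_mul hj₀ (fun _ => le_rfl)
        (fun x => one_pos.trans_le (hw x)) hw'
      rwa [one_mul] at this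

end MatrixKernel

lemma RapidDecay.summable_norm {R : Type*} [SeminormedAddCommGroup R] {K : Z2 → Z2 → R}
    (hK : RapidDecay K fun x y => bracket x y * bracket x 0) :
    Summable fun xy : Z2 × Z2 => ‖K xy.1 xy.2‖ := by
  obtain ⟨C, -, hC⟩ := hK 3 (by norm_num)
  have h3 : (2 : ℝ) < 3 := by norm_num
  have hg : Summable fun xy : Z2 × Z2 =>
      bracket xy.1 0 ^ (-3 : ℝ) * bracket xy.1 xy.2 ^ (-3 : ℝ) := by
    refine (summable_prod_of_nonneg fun xy => mul_nonneg (rpow_nonneg (bracket_pos _ _).le _)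
      (rpow_nonneg (bracket_pos _ _).le _)).2
      ⟨fun x => (summable_bracket_rpow_neg h3 x).mul_left (bracket x 0 ^ (-3 : ℝ)), ?_⟩
    simp_rw [tsum_mul_left, tsum_bracket_rpow_neg]
    exact (summable_bracket_zero_rpow_neg h3).mul_right _
  refine (hg.mul_left C).of_nonneg_of_le (fun _ => norm_nonneg _) fun xy => (hC _ _).trans_eq ?_
  rw [mul_rpow (bracket_pos _ _).le (bracket_pos _ _).le]
  ring

lemma one_le_psi (U V : Set R2) (x : R2) : 1 ≤ Psi U V x := by
  unfold Psi; linarith [d1S_nonneg x (frontier U), d1S_nonneg x (frontier V)]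

lemma d1_zero_le_two_mul_eunorm (x : R2) : d1 x 0 ≤ 2 * eunorm x := by
  have h₁ : |x.1| ≤ eunorm x := Real.abs_le_sqrt (by nlinarith [sq_nonneg x.2])
  have h₂ : |x.2| ≤ eunorm x := Real.abs_le_sqrt (by nlinarith [sq_nonneg x.1])
  simp only [d1, Prod.fst_zero, Prod.snd_zero, sub_zero]
  linarith

lemma Transverse.exists_rpow_le {U V : Set R2} (h : Transverse U V) :
    ∃ c : ℝ, 0 < c ∧ c < 1 ∧ ∃ D : ℝ, 0 < D ∧ ∀ x : R2, (1 + d1 x 0) ^ c ≤ D * Psi U V x := by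
  obtain ⟨c, hc₀, hc₁, hPsi⟩ := h
  refine ⟨c, hc₀, hc₁, (3 + 2 / c) ^ c, by positivity, fun x => ?_⟩
  have hx := d1_zero_le_two_mul_eunorm x
  have h₀ : 0 ≤ 1 + d1 x 0 := by linarith [d1_nonneg x 0]
  have h2c : 0 < 2 / c := by positivity
  by_cases hfar : 1 / c ≤ eunorm x
  · have he : 1 ≤ eunorm x := by
      linarith [(one_lt_div hc₀).2 hc₁]
    calc (1 + d1 x 0) ^ c ≤ ((3 + 2 / c) * eunorm x) ^ c :=
          rpow_le_rpow h₀ (by nlinarith) hc₀.le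
      _ = (3 + 2 / c) ^ c * eunorm x ^ c := mul_rpow (by positivity) (by linarith)
      _ ≤ (3 + 2 / c) ^ c * Psi U V x :=
          mul_le_mul_of_nonneg_left (hPsi x hfar) (by positivity)
  · calc (1 + d1 x 0) ^ c ≤ (3 + 2 / c) ^ c :=
          rpow_le_rpow h₀ (by rw [one_div] at hfar; rw [div_eq_mul_inv]; linarith) hc₀.le
      _ ≤ (3 + 2 / c) ^ c * Psi U V x :=
          le_mul_of_one_le_right (by positivity) (one_le_psi U V x)

lemma psi_le_distWeight_mul (U V : Set R2) (x : Z2) :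
    Psi U V (emb x) ≤ distWeight (frontier U) x * distWeight (frontier V) x := by
  unfold Psi distWeight
  nlinarith [d1S_nonneg (emb x) (frontier U), d1S_nonneg (emb x) (frontier V)]

lemma WeightedDecay.rapidDecay_of_transverse {R : Type*} [SeminormedAddCommGroup R]
    {K : Z2 → Z2 → R} {U V : Set R2} (hUV : Transverse U V)
    (hU : WeightedDecay K (distWeight (frontier U)))
    (hV : WeightedDecay K (distWeight (frontier V))) :
    RapidDecay K fun x y => bracket x y * bracket x 0 := by
  obtain ⟨c, hc₀, hc₁, D, hD, hPsi⟩ := hUV.exists_rpow_le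
  have hw : ∀ (A : Set R2) x y, 0 ≤ bracket x y * distWeight A x := fun A x y =>
    mul_nonneg (bracket_pos x y).le (one_pos.trans_le (one_le_distWeight A x)).le
  refine (RapidDecay.mul hU hV (hw _) (hw _)).of_rpow_le hc₀ hD
    (fun x y => mul_pos (bracket_pos x y) (bracket_pos x 0)) fun x y => ?_
  have hb : bracket x y ^ c ≤ bracket x y := by
    simpa using rpow_le_rpow_of_exponent_le (one_le_bracket x y) hc₁.le
  have hb₀ : bracket x 0 ^ c ≤ D * (distWeight (frontier U) x * distWeight (frontier V) x) := by
    have : emb 0 = 0 := by ext <;> simp [emb]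
    rw [bracket, this]
    exact (hPsi (emb x)).trans (mul_le_mul_of_nonneg_left (psi_le_distWeight_mul U V x) hD.le)
  set b := bracket x y
  set W := D * (distWeight (frontier U) x * distWeight (frontier V) x)
  have hW : 0 ≤ b * W := by
    have := one_le_distWeight (frontier U) x
    have := one_le_distWeight (frontier V) x
    have := bracket_pos x y
    positivity
  calc (b * bracket x 0) ^ c = b ^ c * bracket x 0 ^ c :=
        mul_rpow (bracket_pos x y).le (bracket_pos x 0).le
    _ ≤ b * W := mul_le_mul hb hb₀ (rpow_nonneg (bracket_pos x 0).le c) (bracket_pos x y).le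
    _ ≤ b * W * b := le_mul_of_one_le_right hW (one_le_bracket x y)
    _ = D * (b * distWeight (frontier U) x * (b * distWeight (frontier V) x)) := by ring

theorem kernel_product_trace_class_general
    (m : ℕ) (n : ℕ)
    (U V : Set R2) (hUV : Transverse U V)
    (S : ℕ → Z2 → Z2 → Matrix (Fin m) (Fin m) ℂ)
    (hPSR : ∀ j < n, IsPSRker (S j))
    (p : ℕ) (hp : p < n)
    (hSp : ∀ N : ℝ, 0 < N → ∃ C : ℝ, 0 < C ∧ ∀ x y : Z2,
      matNorm (S p x y) ≤ C * Real.exp (-N * dlS (emb x) (frontier U)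
        - N * dlS (emb y) (frontier U)))
    (q : ℕ) (hq : q < n)
    (hSq : ∀ N : ℝ, 0 < N → ∃ C : ℝ, 0 < C ∧ ∀ x y : Z2,
      matNorm (S q x y) ≤ C * Real.exp (-N * dlS (emb x) (frontier V)
        - N * dlS (emb y) (frontier V))) :
    (∀ k : ℕ, k + 1 < n → ∀ x y : Z2,
      Summable fun z : Z2 => matNorm (PP S k x z * S (k + 1) z y)) ∧
    Summable (fun xy : Z2 × Z2 => matNorm (PP S (n - 1) xy.1 xy.2)) := by
  have hS : ∀ j < n, WeightedDecay (S j) 1 := fun j hj =>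
    weightedDecay_one_iff_rapidDecay.2 (hPSR j hj)
  refine ⟨fun k hk x y => (weightedDecay_PP_one hS k (by omega)).summable_norm_mul (hS (k + 1) hk)
    (fun _ => le_rfl) (fun _ => one_pos) one_le_bracket_mul_one x y, ?_⟩
  have hU := weightedDecay_PP hS (one_le_distWeight _) (distWeight_le_bracket_mul _)
    ((hPSR p hp).weightedDecay_distWeight hSp) (n - 1) (by omega) (by omega)
  have hV := weightedDecay_PP hS (one_le_distWeight _) (distWeight_le_bracket_mul _)
    ((hPSR q hq).weightedDecay_distWeight hSq) (n - 1) (by omega) (by omega)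
  exact (hU.rapidDecay_of_transverse hUV hV).summable_norm

/-- Corollary 2.5: an iterated product of Hermitian PSR kernels, two
of which decay rapidly away from ∂U resp. ∂V with U, V transverse, is the kernel of a
trace-class operator; the kernels are indexed by 0,…,n−1. -/
theorem kernel_product_trace_class
    (m : ℕ) (hm : 0 < m) (n : ℕ) (hn : 1 ≤ n)
    (U V : Set R2) (hUV : Transverse U V)
    (S : ℕ → Z2 → Z2 → Matrix (Fin m) (Fin m) ℂ)
    (hHerm : ∀ j < n, ∀ x y : Z2, S j x y = Matrix.conjTranspose (S j y x))
    (hPSR : ∀ j < n, IsPSRker (S j))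
    (p : ℕ) (hp : p < n)
    (hSp : ∀ N : ℝ, 0 < N → ∃ C : ℝ, 0 < C ∧ ∀ x y : Z2,
      matNorm (S p x y) ≤ C * Real.exp (-N * dlS (emb x) (frontier U)
        - N * dlS (emb y) (frontier U)))
    (q : ℕ) (hq : q < n)
    (hSq : ∀ N : ℝ, 0 < N → ∃ C : ℝ, 0 < C ∧ ∀ x y : Z2,
      matNorm (S q x y) ≤ C * Real.exp (-N * dlS (emb x) (frontier V)
        - N * dlS (emb y) (frontier V))) :
    (∀ k : ℕ, k + 1 < n → ∀ x y : Z2,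
      Summable fun z : Z2 => matNorm (PP S k x z * S (k + 1) z y)) ∧
    Summable (fun xy : Z2 × Z2 => matNorm (PP S (n - 1) xy.1 xy.2)) :=
  kernel_product_trace_class_general m n U V hUV S hPSR p hp hSp q hq hSq

end
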